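/- For the free Laplacian on the infinite star graph (a center $0$ joined to $N$ copies of $\mathbb{N}$): the function $\Psi = s + \mathbf{1}^{(1)}+\cdots+\mathbf{1}^{(N)}$ (the constant function $1$ on the whole graph) satisfies $-\Delta_G\Psi=0$, and any bounded solution of $-\Delta_G\Psi=0$ decaying to $0$ along every ray must be identically zero; in particular the Laplacian on the infinite star graph has no zero bound states (zero is an exceptional point of the first kind with one-dimensional resonance space spanned by the constant function). -/

import Mathlib

open Filter

/-- The graph Laplacian `-Δ_G` on the infinite star graph with center `Sum.inl ()` and
`N` rays; `Sum.inr (α, n)` is the `(n+1)`-st vertex of ray `α`. -/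
noncomputable def starLap (N : ℕ) (Ψ : Unit ⊕ Fin N × ℕ → ℂ) : Unit ⊕ Fin N × ℕ → ℂ
  | Sum.inl _ => (N : ℂ) * Ψ (Sum.inl ()) - ∑ α : Fin N, Ψ (Sum.inr (α, 0))
  | Sum.inr (α, 0) => 2 * Ψ (Sum.inr (α, 0)) - Ψ (Sum.inr (α, 1)) - Ψ (Sum.inl ())
  | Sum.inr (α, n + 1) =>
      2 * Ψ (Sum.inr (α, n + 1)) - Ψ (Sum.inr (α, n + 2)) - Ψ (Sum.inr (α, n))

/-!
Along each ray, harmonicity says the second difference of the values `Ψ(0), Ψ(1), Ψ(2), …`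
(centre first) vanishes, so they form an arithmetic progression. An arithmetic progression
tending to `0` is identically `0`; since there is at least one ray, this also kills the value
at the centre, hence every ray.
-/

open Topology

section ArithmeticProgression

variable {E : Type*} [AddCommGroup E]

theorem eq_add_nsmul_of_sub_eq_sub {u : ℕ → E}
    (hu : ∀ n, u (n + 2) - u (n + 1) = u (n + 1) - u n) (n : ℕ) :
    u n = u 0 + n • (u 1 - u 0) := by
  have hstep : ∀ n, u (n + 1) - u n = u 1 - u 0 := by
    intro n
    induction n with
    | zero => rfl
    | succ k ih => rw [hu, ih]
  induction n with
  | zero => simp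
  | succ k ih => rw [succ_nsmul, ← add_assoc, ← ih, ← hstep k, add_sub_cancel]

variable [TopologicalSpace E] [IsTopologicalAddGroup E] [T2Space E]

theorem eq_zero_of_tendsto_add_nsmul {a d : E}
    (h : Tendsto (fun n : ℕ => a + n • d) atTop (𝓝 0)) : a = 0 ∧ d = 0 := by
  have hd : d = 0 := by
    have hdiff := ((tendsto_add_atTop_iff_nat 1).2 h).sub h
    simp only [succ_nsmul, ← add_assoc, add_sub_cancel_left, sub_zero] at hdiff
    exact tendsto_nhds_unique tendsto_const_nhds hdiff
  subst hd
  simp only [smul_zero, add_zero] at h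
  exact ⟨tendsto_nhds_unique tendsto_const_nhds h, rfl⟩

theorem eq_zero_of_sub_eq_sub_of_tendsto {u : ℕ → E}
    (hu : ∀ n, u (n + 2) - u (n + 1) = u (n + 1) - u n) (h : Tendsto u atTop (𝓝 0)) :
    u = 0 := by
  have hform := eq_add_nsmul_of_sub_eq_sub hu
  obtain ⟨h0, h1⟩ := eq_zero_of_tendsto_add_nsmul (funext hform ▸ h)
  funext n
  rw [hform, h1, h0, smul_zero, add_zero, Pi.zero_apply]

end ArithmeticProgression

theorem starLap_const (N : ℕ) (c : ℂ) : starLap N (fun _ => c) = 0 := by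
  funext x
  rcases x with _ | ⟨α, _ | n⟩ <;> simp [starLap] <;> ring

def starRay {N : ℕ} (Ψ : Unit ⊕ Fin N × ℕ → ℂ) (α : Fin N) : ℕ → ℂ
  | 0 => Ψ (Sum.inl ())
  | n + 1 => Ψ (Sum.inr (α, n))

theorem starRay_sub_eq_sub {N : ℕ} {Ψ : Unit ⊕ Fin N × ℕ → ℂ} (α : Fin N)
    (hΨ : ∀ n, starLap N Ψ (Sum.inr (α, n)) = 0) (n : ℕ) :
    starRay Ψ α (n + 2) - starRay Ψ α (n + 1) = starRay Ψ α (n + 1) - starRay Ψ α n := by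
  have h := hΨ n
  rcases n with _ | n <;> simp only [starLap, starRay] at h ⊢ <;> linear_combination -h

/-- On the infinite star graph, the constant function `1` is harmonic, and every bounded
harmonic function tending to `0` along every ray vanishes identically: the Laplacian on the
infinite star graph has no zero bound states. -/
theorem starLap_const_harmonic_and_no_bound_states (N : ℕ) (hN : 1 ≤ N) :
    (∀ x, starLap N (fun _ => (1 : ℂ)) x = 0) ∧
      ∀ Ψ : Unit ⊕ Fin N × ℕ → ℂ, (∀ x, starLap N Ψ x = 0) →
        (∃ C : ℝ, ∀ x, ‖Ψ x‖ ≤ C) →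
        (∀ α : Fin N, Tendsto (fun n : ℕ => Ψ (Sum.inr (α, n))) atTop (nhds 0)) →
        Ψ = 0 := by
  refine ⟨fun x => congrFun (starLap_const N 1) x, fun Ψ hΨ _ hdecay => ?_⟩
  have hray (α : Fin N) : starRay Ψ α = 0 :=
    eq_zero_of_sub_eq_sub_of_tendsto (starRay_sub_eq_sub α fun _ => hΨ _)
      ((tendsto_add_atTop_iff_nat 1).1 (hdecay α))
  funext x
  rcases x with ⟨⟩ | ⟨α, n⟩
  · exact congrFun (hray ⟨0, hN⟩) 0
  · exact congrFun (hray α) (n + 1)
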